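/- (Proposition 2, sampled-data CBF with higher relative degree.) Let x be a closed-loop trajectory of the sampled-data control-affine system, where h has relative degree r and s_k(x(0)) ≥ 0 for every k = 0, …, r−1. Suppose that for each k ∈ ℕ there exist a set S_k ⊆ ℝⁿ (an over-approximation of the reachable tube over the sampling interval) and a real margin φ_k such that: (i) x(t) ∈ S_k for all t ∈ [t_k, t_{k+1}]; (ii) ξ(x′, u) − ξ(x_k, u) ≥ φ_k for every x′ ∈ S_k and every u ∈ U; and (iii) the applied input satisfies u_k ∈ U and the sampled-data CBF condition ξ(x_k, u_k) + φ_k ≥ 0, i.e. L_f^r h(x_k) + L_g L_f^{r−1} h(x_k) u_k + aᵀη(x_k) + φ_k ≥ 0. Then h(x(t)) ≥ 0 for all t ≥ 0. -/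

import Mathlib

open Set Filter

noncomputable section

/-- `ℝⁿ` as a Euclidean space. -/
abbrev E (n : ℕ) : Type := EuclideanSpace ℝ (Fin n)

/-- Iterated Lie derivative along `f`: `L_f^0 h = h`, `L_f^{k+1} h (x) = ∇(L_f^k h)(x)·f(x)`. -/
noncomputable def lieIter {n : ℕ} (f : E n → E n) (h : E n → ℝ) : ℕ → E n → ℝ
  | 0 => h
  | k + 1 => fun p => fderiv ℝ (lieIter f h k) p (f p)

/-- The cascaded functions `s_0 = h`, `s_k = L_f s_{k-1} + λ_k s_{k-1}` (using `lam k` as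
`λ_k`). -/
noncomputable def cascade {n : ℕ} (f : E n → E n) (h : E n → ℝ) (lam : ℕ → ℝ) :
    ℕ → E n → ℝ
  | 0 => h
  | k + 1 => fun p =>
      fderiv ℝ (cascade f h lam k) p (f p) + lam (k + 1) * cascade f h lam k p

/-- `esym lam k j` is the `j`-th elementary symmetric polynomial `e_j(λ_1, …, λ_k)`
(so `esym lam k 0 = 1`). -/
noncomputable def esym (lam : ℕ → ℝ) (k j : ℕ) : ℝ :=
  ∑ S ∈ (Finset.Icc 1 k).powersetCard j, ∏ i ∈ S, lam i

/-- The higher-order CBF expression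
`ξ(x,u) = L_f^r h(x) + L_g L_f^{r-1} h(x) u + aᵀη(x)`, where `a_i = e_i(λ_1, …, λ_r)` and
`aᵀη(x) = Σ_{i=0}^{r-1} e_{r-i}(λ_1, …, λ_r) · L_f^i h(x)`. -/
noncomputable def xiR {n m : ℕ} (f : E n → E n) (g : E n → E m →L[ℝ] E n)
    (h : E n → ℝ) (lam : ℕ → ℝ) (r : ℕ) (p : E n) (v : E m) : ℝ :=
  lieIter f h r p + fderiv ℝ (lieIter f h (r - 1)) p (g p v)
    + ∑ i ∈ Finset.range r, esym lam r (r - i) * lieIter f h i p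

/-! Along the flow the cascade satisfies `s_k' = s_{k+1} - λ_{k+1} s_k + L_g s_k · u`, where the
relative degree gives `L_g s_k = 0` for `k < r - 1` and `s_r + L_g s_{r-1} u = ξ(·, u)`. On each
sampling interval the margin turns the sampled condition at `x_k` into `ξ(x(t), u_k) ≥ 0`, i.e.
`s_{r-1}' + λ_r s_{r-1} ≥ 0`. Since `e^{λ t} y` is nondecreasing on every sampling interval when
`y' + λ y ≥ 0` there, and continuous across sampling instants, `s_{r-1}(x(t)) ≥ 0` for all `t ≥ 0`;
then `s_k' + λ_{k+1} s_k = s_{k+1} ≥ 0` propagates nonnegativity down the cascade to `s_0 = h`. -/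

open Finset

section ElementarySymmetric

variable (lam : ℕ → ℝ)

@[simp]
theorem esym_zero (k : ℕ) : esym lam k 0 = 1 := by
  simp [esym]

theorem esym_of_lt {k j : ℕ} (hkj : k < j) : esym lam k j = 0 := by
  have hempty : (Finset.Icc 1 k).powersetCard j = ∅ :=
    powersetCard_eq_empty.mpr (by simpa using hkj)
  simp [esym, hempty]

theorem esym_succ_succ (k j : ℕ) :
    esym lam (k + 1) (j + 1) = esym lam k (j + 1) + lam (k + 1) * esym lam k j := by
  have hIcc : Finset.Icc 1 (k + 1) = cons (k + 1) (Finset.Icc 1 k) (by simp) := by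
    ext; simp; omega
  simp only [esym, ← esymm_map_val, hIcc, cons_val, Multiset.map_cons]
  simp [Multiset.esymm, Multiset.powersetCard_cons, Multiset.map_map, Multiset.sum_map_mul_left]

end ElementarySymmetric

theorem fderiv_sum_const_mul_apply {𝕜 F ι : Type*} [NontriviallyNormedField 𝕜]
    [NormedAddCommGroup F] [NormedSpace 𝕜 F] {s : Finset ι} {φ : ι → F → 𝕜} {p : F}
    (c : ι → 𝕜) (hφ : ∀ i ∈ s, DifferentiableAt 𝕜 (φ i) p) (w : F) :
    fderiv 𝕜 (fun q => ∑ i ∈ s, c i * φ i q) p w = ∑ i ∈ s, c i * fderiv 𝕜 (φ i) p w := by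
  rw [fderiv_fun_sum fun i hi => (hφ i hi).const_mul (c i), _root_.sum_apply]
  refine sum_congr rfl fun i hi => ?_
  rw [fderiv_const_mul (hφ i hi), smul_apply, smul_eq_mul]

section LieDerivative

variable {n : ℕ} {f : E n → E n} {h : E n → ℝ}

theorem contDiff_lieIter {r : ℕ} (hf : ContDiff ℝ (r - 1 : ℕ) f) (hh : ContDiff ℝ r h)
    {k : ℕ} (hk : k ≤ r) : ContDiff ℝ (r - k : ℕ) (lieIter f h k) := by
  induction k with
  | zero => simpa [lieIter] using hh
  | succ k ih =>
    have hsmooth : ContDiff ℝ ((r - (k + 1) : ℕ) + 1 : ℕ) (lieIter f h k) := by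
      convert ih (by omega) using 2; omega
    exact (hsmooth.fderiv_right (by norm_cast)).clm_apply
      (hf.of_le (by norm_cast; omega))

theorem differentiable_lieIter {r : ℕ} (hf : ContDiff ℝ (r - 1 : ℕ) f) (hh : ContDiff ℝ r h)
    {k : ℕ} (hk : k < r) : Differentiable ℝ (lieIter f h k) :=
  (contDiff_lieIter hf hh hk.le).differentiable (by norm_cast; omega)

variable (lam : ℕ → ℝ)

theorem cascade_eq_sum {k : ℕ} (hd : ∀ i < k, Differentiable ℝ (lieIter f h i)) :
    cascade f h lam k =
      fun p => ∑ i ∈ range (k + 1), esym lam k (k - i) * lieIter f h i p := by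
  induction k with
  | zero => funext p; simp [cascade, lieIter]
  | succ k ih =>
    funext p
    have shift : ∑ i ∈ range (k + 1), esym lam k (k - i) * lieIter f h (i + 1) p
        = ∑ i ∈ range (k + 2), esym lam k (k + 1 - i) * lieIter f h i p := by
      rw [sum_range_succ' _ (k + 1), esym_of_lt lam (by omega : k < k + 1 - 0)]
      simp
    have pascal : ∑ i ∈ range (k + 2), esym lam (k + 1) (k + 1 - i) * lieIter f h i p
        = ∑ i ∈ range (k + 2), esym lam k (k + 1 - i) * lieIter f h i p
          + lam (k + 1) * ∑ i ∈ range (k + 1), esym lam k (k - i) * lieIter f h i p := by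
      rw [sum_range_succ, sum_range_succ _ (k + 1), mul_sum, add_right_comm,
        ← sum_add_distrib]
      simp only [Nat.sub_self, esym_zero]
      congr 1
      refine sum_congr rfl fun i hi => ?_
      rw [show k + 1 - i = k - i + 1 by simp at hi; omega, esym_succ_succ]
      ring
    show fderiv ℝ (cascade f h lam k) p (f p) + lam (k + 1) * cascade f h lam k p = _
    rw [ih fun i hi => hd i (by omega), fderiv_sum_const_mul_apply _
      (fun i hi => (hd i (by simp at hi; omega)).differentiableAt)]
    exact (shift ▸ pascal).symm

theorem differentiable_cascade {k : ℕ} (hd : ∀ i ≤ k, Differentiable ℝ (lieIter f h i)) :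
    Differentiable ℝ (cascade f h lam k) := by
  rw [cascade_eq_sum lam fun i hi => hd i hi.le]
  exact Differentiable.fun_sum fun i hi => (hd i (by simp at hi; omega)).const_mul _

theorem fderiv_cascade_apply {k : ℕ} (hd : ∀ i ≤ k, Differentiable ℝ (lieIter f h i))
    {p w : E n} (hw : ∀ i < k, fderiv ℝ (lieIter f h i) p w = 0) :
    fderiv ℝ (cascade f h lam k) p w = fderiv ℝ (lieIter f h k) p w := by
  rw [cascade_eq_sum lam fun i hi => hd i hi.le, fderiv_sum_const_mul_apply _
    (fun i hi => (hd i (by simp at hi; omega)).differentiableAt), sum_range_succ,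
    sum_eq_zero fun i hi => by rw [hw i (by simpa using hi), mul_zero]]
  simp

theorem xiR_eq_cascade_add {m r : ℕ} (g : E n → E m →L[ℝ] E n)
    (hd : ∀ i < r, Differentiable ℝ (lieIter f h i)) (p : E n) (v : E m) :
    xiR f g h lam r p v = cascade f h lam r p + fderiv ℝ (lieIter f h (r - 1)) p (g p v) := by
  rw [xiR, cascade_eq_sum lam hd]
  dsimp only
  rw [sum_range_succ, Nat.sub_self, esym_zero]
  ring

theorem hasDerivAt_cascade_comp {m k : ℕ} {g : E n → E m →L[ℝ] E n} {x : ℝ → E n} {s : ℝ}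
    {v : E m} (hc : Differentiable ℝ (cascade f h lam k))
    (hx : HasDerivAt x (f (x s) + g (x s) v) s) :
    HasDerivAt (fun τ => cascade f h lam k (x τ))
      (cascade f h lam (k + 1) (x s) - lam (k + 1) * cascade f h lam k (x s)
        + fderiv ℝ (cascade f h lam k) (x s) (g (x s) v)) s := by
  refine ((hc (x s)).hasFDerivAt.comp_hasDerivAt s hx).congr_deriv ?_
  simp only [cascade, map_add]
  ring

end LieDerivative

theorem exists_mem_Ico_of_tendsto_atTop {α : Type*} [LinearOrder α] [NoMaxOrder α]
    {t : ℕ → α} (ht : Tendsto t atTop atTop) {s : α} (hs : t 0 ≤ s) :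
    ∃ k, s ∈ Ico (t k) (t (k + 1)) := by
  obtain ⟨N, hN⟩ := (ht.eventually_gt_atTop s).exists
  obtain ⟨k, -, hk⟩ := mem_iUnion₂.mp (Ico_subset_biUnion_Ico N t ⟨hs, hN⟩)
  exact ⟨k, hk⟩

theorem le_of_hasDerivAt_nonneg_of_sampling {t : ℕ → ℝ} (ht : Monotone t)
    (httop : Tendsto t atTop atTop) {z : ℝ → ℝ} (hzc : ContinuousOn z (Ici (t 0)))
    (hz : ∀ k, ∀ s ∈ Ioo (t k) (t (k + 1)), ∃ d, HasDerivAt z d s ∧ 0 ≤ d)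
    {s : ℝ} (hs : t 0 ≤ s) : z (t 0) ≤ z s := by
  have hmono : ∀ k, MonotoneOn z (Icc (t k) (t (k + 1))) := fun k => by
    refine monotoneOn_of_deriv_nonneg (convex_Icc _ _)
      (hzc.mono fun τ hτ => (ht (Nat.zero_le k)).trans hτ.1) ?_ ?_ <;> rw [interior_Icc]
    · intro τ hτ
      obtain ⟨d, hd, -⟩ := hz k τ hτ
      exact hd.differentiableAt.differentiableWithinAt
    · intro τ hτ
      obtain ⟨d, hd, hd0⟩ := hz k τ hτ
      exact hd.deriv ▸ hd0
  have hsample : ∀ k, z (t 0) ≤ z (t k) := fun k => by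
    induction k with
    | zero => rfl
    | succ k ih =>
      exact ih.trans (hmono k ⟨le_rfl, ht k.le_succ⟩ ⟨ht k.le_succ, le_rfl⟩ (ht k.le_succ))
  obtain ⟨k, hks, hsk⟩ := exists_mem_Ico_of_tendsto_atTop httop hs
  exact (hsample k).trans (hmono k ⟨le_rfl, hks.trans hsk.le⟩ ⟨hks, hsk.le⟩ hks)

theorem nonneg_of_hasDerivAt_add_mul_nonneg_of_sampling {t : ℕ → ℝ} (ht : Monotone t)
    (httop : Tendsto t atTop atTop) {y : ℝ → ℝ} (hyc : ContinuousOn y (Ici (t 0)))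
    (hy0 : 0 ≤ y (t 0)) (c : ℝ)
    (hy : ∀ k, ∀ s ∈ Ioo (t k) (t (k + 1)), ∃ d, HasDerivAt y d s ∧ 0 ≤ d + c * y s)
    {s : ℝ} (hs : t 0 ≤ s) : 0 ≤ y s := by
  have hz := le_of_hasDerivAt_nonneg_of_sampling ht httop (z := fun τ => Real.exp (c * τ) * y τ)
    ((by fun_prop : Continuous fun τ => Real.exp (c * τ)).continuousOn.mul hyc) ?_ hs
  · exact nonneg_of_mul_nonneg_right ((mul_nonneg (Real.exp_pos _).le hy0).trans hz)
      (Real.exp_pos _)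
  · intro k τ hτ
    obtain ⟨d, hd, hd0⟩ := hy k τ hτ
    have hexp : HasDerivAt (fun τ => Real.exp (c * τ)) (Real.exp (c * τ) * c) τ := by
      simpa using ((hasDerivAt_id τ).const_mul c).exp
    exact ⟨_, hexp.mul hd, by nlinarith [Real.exp_pos (c * τ)]⟩

theorem cascade_comp_nonneg_of_sampling {n m k : ℕ} {f : E n → E n} {g : E n → E m →L[ℝ] E n}
    {h : E n → ℝ} (lam : ℕ → ℝ) (hc : Differentiable ℝ (cascade f h lam k))
    {t : ℕ → ℝ} (ht : Monotone t) (httop : Tendsto t atTop atTop) {u : ℕ → E m}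
    {x : ℝ → E n} (hxc : ContinuousOn x (Ici (t 0)))
    (hode : ∀ j, ∀ s ∈ Ioo (t j) (t (j + 1)), HasDerivAt x (f (x s) + g (x s) (u j)) s)
    (hinit : 0 ≤ cascade f h lam k (x (t 0)))
    (hnext : ∀ j, ∀ s ∈ Ioo (t j) (t (j + 1)),
      0 ≤ cascade f h lam (k + 1) (x s) + fderiv ℝ (cascade f h lam k) (x s) (g (x s) (u j)))
    {s : ℝ} (hs : t 0 ≤ s) : 0 ≤ cascade f h lam k (x s) :=
  nonneg_of_hasDerivAt_add_mul_nonneg_of_sampling ht httop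
    (hc.continuous.comp_continuousOn hxc) hinit (lam (k + 1))
    (fun j s hs => ⟨_, hasDerivAt_cascade_comp lam hc (hode j s hs), by
      simp only [Function.comp_apply]; linarith [hnext j s hs]⟩) hs

theorem stmt_8_general {n m : ℕ} (r : ℕ) (hr : 2 ≤ r)
    (f : E n → E n) (hf : ContDiff ℝ (r - 1 : ℕ) f)
    (g : E n → E m →L[ℝ] E n)
    (U : Set (E m))
    (h : E n → ℝ) (hh : ContDiff ℝ (r : ℕ) h)
    (lam : ℕ → ℝ)
    (hreldeg : ∀ k, k + 2 ≤ r → ∀ p : E n, ∀ v : E m,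
      fderiv ℝ (lieIter f h k) p (g p v) = 0)
    (t : ℕ → ℝ) (ht0 : t 0 = 0) (htmono : StrictMono t)
    (httop : Tendsto t atTop atTop)
    (u : ℕ → E m)
    (x : ℝ → E n) (hxc : ContinuousOn x (Ici (0 : ℝ)))
    (hode : ∀ k, ∀ s ∈ Ioo (t k) (t (k + 1)),
      HasDerivAt x (f (x s) + g (x s) (u k)) s)
    (hinit : ∀ k < r, 0 ≤ cascade f h lam k (x 0))
    (S : ℕ → Set (E n)) (φ : ℕ → ℝ)
    (hreach : ∀ k, ∀ s ∈ Icc (t k) (t (k + 1)), x s ∈ S k)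
    (hmargin : ∀ k, ∀ x' ∈ S k, ∀ v ∈ U,
      φ k ≤ xiR f g h lam r x' v - xiR f g h lam r (x (t k)) v)
    (huU : ∀ k, u k ∈ U)
    (hcbf : ∀ k, 0 ≤ xiR f g h lam r (x (t k)) (u k) + φ k) :
    ∀ s, 0 ≤ s → 0 ≤ h (x s) := by
  have hlie : ∀ i < r, Differentiable ℝ (lieIter f h i) := fun i hi =>
    differentiable_lieIter hf hh hi
  have hLg : ∀ k < r, ∀ p v, fderiv ℝ (cascade f h lam k) p (g p v) =
      fderiv ℝ (lieIter f h k) p (g p v) := fun k hk p v =>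
    fderiv_cascade_apply lam (fun i hi => hlie i (by omega)) fun i hi => hreldeg i (by omega) p v
  have level : ∀ k < r, (∀ j, ∀ s ∈ Ioo (t j) (t (j + 1)),
      0 ≤ cascade f h lam (k + 1) (x s) + fderiv ℝ (cascade f h lam k) (x s) (g (x s) (u j))) →
      ∀ s, 0 ≤ s → 0 ≤ cascade f h lam k (x s) := fun k hk hnext s hs =>
    cascade_comp_nonneg_of_sampling lam (differentiable_cascade lam fun i hi => hlie i (by omega))
      htmono.monotone httop (ht0 ▸ hxc) hode (ht0 ▸ hinit k hk) hnext (ht0 ▸ hs)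
  have top : ∀ s, 0 ≤ s → 0 ≤ cascade f h lam (r - 1) (x s) := level (r - 1) (by omega)
    fun j s hs => by
      rw [hLg _ (by omega), Nat.sub_add_cancel (by omega), ← xiR_eq_cascade_add lam g hlie]
      linarith [hmargin j (x s) (hreach j s (Ioo_subset_Icc_self hs)) (u j) (huU j), hcbf j]
  have below : ∀ k ≤ r - 1, ∀ s, 0 ≤ s → 0 ≤ cascade f h lam k (x s) := fun k hk =>
    Nat.decreasingInduction (motive := fun k _ => ∀ s, 0 ≤ s → 0 ≤ cascade f h lam k (x s))
      (fun k hk hnext => level k (by omega) fun j s hs => by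
        rw [hLg k (by omega), hreldeg k (by omega), add_zero]
        exact hnext s ((ht0 ▸ htmono.monotone (Nat.zero_le j)).trans hs.1.le))
      top hk
  exact below 0 (Nat.zero_le _)

/-- Proposition 2 (sampled-data CBF with higher relative degree): if `s_k(x(0)) ≥ 0` for
`k = 0, …, r-1`, on each sampling interval the trajectory stays in a set `S k` over which
`ξ(·,u) - ξ(x_k,u)` is bounded below by a margin `φ k` uniformly in `u ∈ U`, and the
applied input satisfies the sampled-data CBF condition `ξ(x_k, u_k) + φ k ≥ 0`, then
`h(x(t)) ≥ 0` for all `t ≥ 0`. -/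
theorem stmt_8 {n m : ℕ} (r : ℕ) (hr : 2 ≤ r)
    (f : E n → E n) (hfl : LocallyLipschitz f) (hf : ContDiff ℝ (r - 1 : ℕ) f)
    (g : E n → E m →L[ℝ] E n) (hgl : LocallyLipschitz g)
    (U : Set (E m))
    (h : E n → ℝ) (hh : ContDiff ℝ (r : ℕ) h)
    (lam : ℕ → ℝ) (hlam : ∀ i, 1 ≤ i → i ≤ r → 0 < lam i)
    (hreldeg : ∀ k, k + 2 ≤ r → ∀ p : E n, ∀ v : E m,
      fderiv ℝ (lieIter f h k) p (g p v) = 0)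
    (t : ℕ → ℝ) (ht0 : t 0 = 0) (htmono : StrictMono t)
    (httop : Tendsto t atTop atTop)
    (u : ℕ → E m)
    (x : ℝ → E n) (hxc : ContinuousOn x (Ici (0 : ℝ)))
    (hode : ∀ k, ∀ s ∈ Ioo (t k) (t (k + 1)),
      HasDerivAt x (f (x s) + g (x s) (u k)) s)
    (hinit : ∀ k < r, 0 ≤ cascade f h lam k (x 0))
    (S : ℕ → Set (E n)) (φ : ℕ → ℝ)
    (hreach : ∀ k, ∀ s ∈ Icc (t k) (t (k + 1)), x s ∈ S k)
    (hmargin : ∀ k, ∀ x' ∈ S k, ∀ v ∈ U,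
      φ k ≤ xiR f g h lam r x' v - xiR f g h lam r (x (t k)) v)
    (huU : ∀ k, u k ∈ U)
    (hcbf : ∀ k, 0 ≤ xiR f g h lam r (x (t k)) (u k) + φ k) :
    ∀ s, 0 ≤ s → 0 ≤ h (x s) :=
  stmt_8_general r hr f hf g U h hh lam hreldeg t ht0 htmono httop u x hxc hode hinit S φ hreach
    hmargin huU hcbf
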